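/- Let (A, ·, [·,·], α) be a Hom-Poisson superalgebra and D an even derivation of (A,·) such that Dα = αD and D([x,y]) = [D(x),y] + [x,D(y)] + λ[x,y] for all x,y ∈ A, where λ ∈ ℂ is fixed. Define x∘y = x·D(y) + λ x·y. Then (A, [·,·], ∘, α) is a super Hom-Gel'fand-Dorfman bialgebra. -/

import Mathlib

/-!
Write `x ∘ y = x · E y` with `E = D + λ`. The hypothesis on `D [x, y]` says exactly that `E` is a
derivation of the bracket, and `E` is even and commutes with `α`.

The Hom-Novikov identities only involve the commutative Hom-associative product:
`(x ∘ y) ∘ α z = α x · (E y · E z)` is supersymmetric in `y, z`, and the associator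
`(x ∘ y) ∘ α z - α x ∘ (y ∘ z) = -α x · (y · D E z)` is supersymmetric in `x, y`.
For the compatibility condition, expand `[x · E y, α z]` by the Leibniz rule in the first slot,
`[u · v, α w] = α u · [v, w] + (-1)^{|u||v|} α v · [u, w]`, and `α x · E [y, z]` by the
derivation property of `E`; the resulting terms cancel in pairs.
-/

noncomputable section

/-- The sign `(-1)^{|x||y|}` attached to parities `i, j` in `ℤ₂`. -/
def sg (i j : ZMod 2) : ℂ := (-1 : ℂ) ^ (i.val * j.val)

variable {A : Type*} [AddCommGroup A] [Module ℂ A]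

/-- `gr` makes `A` into a superspace: `A = A₀ ⊕ A₁`. -/
def IsSupergrading (gr : ZMod 2 → Submodule ℂ A) : Prop :=
  (∀ x : A, ∃ x0 ∈ gr 0, ∃ x1 ∈ gr 1, x = x0 + x1) ∧ (gr 0 ⊓ gr 1 = ⊥)

/-- An even linear map: it preserves the grading. -/
def EvenLin (gr : ZMod 2 → Submodule ℂ A) (α : A →ₗ[ℂ] A) : Prop :=
  ∀ i : ZMod 2, ∀ x ∈ gr i, α x ∈ gr i

/-- An even bilinear map: it adds parities. -/
def EvenBilin (gr : ZMod 2 → Submodule ℂ A) (m : A →ₗ[ℂ] A →ₗ[ℂ] A) : Prop :=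
  ∀ i j : ZMod 2, ∀ x ∈ gr i, ∀ y ∈ gr j, m x y ∈ gr (i + j)

/-- A Hom-Lie superalgebra structure on the superspace `(A, gr)`. -/
def HomLieSuper (gr : ZMod 2 → Submodule ℂ A) (br : A →ₗ[ℂ] A →ₗ[ℂ] A)
    (α : A →ₗ[ℂ] A) : Prop :=
  EvenLin gr α ∧ EvenBilin gr br ∧
  (∀ (i j : ZMod 2), ∀ x ∈ gr i, ∀ y ∈ gr j, br x y = -(sg i j • br y x)) ∧
  (∀ (i j k : ZMod 2), ∀ x ∈ gr i, ∀ y ∈ gr j, ∀ z ∈ gr k,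
    sg i k • br (br x y) (α z) + sg i j • br (br y z) (α x)
      + sg j k • br (br z x) (α y) = 0)

/-- A Hom-Novikov superalgebra structure on the superspace `(A, gr)`. -/
def HomNovikovSuper (gr : ZMod 2 → Submodule ℂ A) (c : A →ₗ[ℂ] A →ₗ[ℂ] A)
    (α : A →ₗ[ℂ] A) : Prop :=
  EvenLin gr α ∧ EvenBilin gr c ∧
  (∀ (i j k : ZMod 2), ∀ x ∈ gr i, ∀ y ∈ gr j, ∀ z ∈ gr k,
    c (c x y) (α z) - c (α x) (c y z) = sg i j • (c (c y x) (α z) - c (α y) (c x z))) ∧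
  (∀ (i j k : ZMod 2), ∀ x ∈ gr i, ∀ y ∈ gr j, ∀ z ∈ gr k,
    c (c x y) (α z) = sg j k • c (c x z) (α y))

/-- A super Hom-Gel'fand-Dorfman bialgebra structure on the superspace `(A, gr)`. -/
def SuperHomGD (gr : ZMod 2 → Submodule ℂ A) (br c : A →ₗ[ℂ] A →ₗ[ℂ] A)
    (α : A →ₗ[ℂ] A) : Prop :=
  HomLieSuper gr br α ∧ HomNovikovSuper gr c α ∧
  (∀ (i j k : ZMod 2), ∀ x ∈ gr i, ∀ y ∈ gr j, ∀ z ∈ gr k,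
    br (c x y) (α z) - sg j k • br (c x z) (α y) + c (br x y) (α z)
      - sg j k • c (br x z) (α y) - c (α x) (br y z) = 0)

/-- A Lie superalgebra structure on the superspace `(A, gr)`. -/
def LieSuper (gr : ZMod 2 → Submodule ℂ A) (br : A →ₗ[ℂ] A →ₗ[ℂ] A) : Prop :=
  EvenBilin gr br ∧
  (∀ (i j : ZMod 2), ∀ x ∈ gr i, ∀ y ∈ gr j, br x y = -(sg i j • br y x)) ∧
  (∀ (i j k : ZMod 2), ∀ x ∈ gr i, ∀ y ∈ gr j, ∀ z ∈ gr k,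
    sg i k • br (br x y) z + sg i j • br (br y z) x + sg j k • br (br z x) y = 0)

/-- A Novikov superalgebra structure on the superspace `(A, gr)`. -/
def NovikovSuper (gr : ZMod 2 → Submodule ℂ A) (c : A →ₗ[ℂ] A →ₗ[ℂ] A) : Prop :=
  EvenBilin gr c ∧
  (∀ (i j k : ZMod 2), ∀ x ∈ gr i, ∀ y ∈ gr j, ∀ z ∈ gr k,
    c (c x y) z - c x (c y z) = sg i j • (c (c y x) z - c y (c x z))) ∧
  (∀ (i j k : ZMod 2), ∀ x ∈ gr i, ∀ y ∈ gr j, ∀ z ∈ gr k,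
    c (c x y) z = sg j k • c (c x z) y)

/-- A super Gel'fand-Dorfman bialgebra structure on the superspace `(A, gr)`. -/
def SuperGD (gr : ZMod 2 → Submodule ℂ A) (br c : A →ₗ[ℂ] A →ₗ[ℂ] A) : Prop :=
  LieSuper gr br ∧ NovikovSuper gr c ∧
  (∀ (i j k : ZMod 2), ∀ x ∈ gr i, ∀ y ∈ gr j, ∀ z ∈ gr k,
    br (c x y) z - sg j k • br (c x z) y + c (br x y) z
      - sg j k • c (br x z) y - c x (br y z) = 0)


/-- A commutative Hom-associative superalgebra structure on the superspace `(A, gr)`. -/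
def CommHomAssocSuper {A : Type*} [AddCommGroup A] [Module ℂ A]
    (gr : ZMod 2 → Submodule ℂ A) (m : A →ₗ[ℂ] A →ₗ[ℂ] A) (α : A →ₗ[ℂ] A) : Prop :=
  EvenLin gr α ∧ EvenBilin gr m ∧
  (∀ (i j : ZMod 2), ∀ x ∈ gr i, ∀ y ∈ gr j, m x y = sg i j • m y x) ∧
  (∀ (i j k : ZMod 2), ∀ x ∈ gr i, ∀ y ∈ gr j, ∀ z ∈ gr k,
    m (α x) (m y z) = m (m x y) (α z))

/-- `D` is a derivation of the (bilinear) product `m`. -/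
def IsDer {A : Type*} [AddCommGroup A] [Module ℂ A]
    (m : A →ₗ[ℂ] A →ₗ[ℂ] A) (D : A →ₗ[ℂ] A) : Prop :=
  ∀ x y : A, D (m x y) = m (D x) y + m x (D y)

/-- A Hom-Poisson superalgebra structure on the superspace `(A, gr)`. -/
def HomPoissonSuper {A : Type*} [AddCommGroup A] [Module ℂ A]
    (gr : ZMod 2 → Submodule ℂ A) (m br : A →ₗ[ℂ] A →ₗ[ℂ] A) (α : A →ₗ[ℂ] A) : Prop :=
  CommHomAssocSuper gr m α ∧ HomLieSuper gr br α ∧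
  (∀ (i j k : ZMod 2), ∀ x ∈ gr i, ∀ y ∈ gr j, ∀ z ∈ gr k,
    br (α x) (m y z) = sg i j • m (α y) (br x z) + sg k (i + j) • m (α z) (br x y))

theorem sg_comm (i j : ZMod 2) : sg i j = sg j i := by
  rw [sg, sg, mul_comm]

theorem sg_mul_self (i j : ZMod 2) : sg i j * sg i j = 1 := by
  rw [sg, ← pow_add, ← two_mul, pow_mul]
  norm_num

theorem sg_add_left (i j k : ZMod 2) : sg (i + j) k = sg i k * sg j k := by
  rw [sg, sg, sg, ← pow_add, neg_one_pow_eq_pow_mod_two, ZMod.val_add, ← add_mul,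
    neg_one_pow_eq_pow_mod_two (n := (i.val + j.val) * k.val), Nat.mul_mod, Nat.mod_mod,
    ← Nat.mul_mod]

theorem sg_add_right (i j k : ZMod 2) : sg i (j + k) = sg i j * sg i k := by
  rw [sg_comm, sg_add_left, sg_comm j, sg_comm k]

variable {gr : ZMod 2 → Submodule ℂ A} {m br : A →ₗ[ℂ] A →ₗ[ℂ] A} {α : A →ₗ[ℂ] A}

theorem EvenLin.add_smul_one {D : A →ₗ[ℂ] A} (hD : EvenLin gr D) (lam : ℂ) :
    EvenLin gr (D + lam • 1) :=
  fun i x hx => add_mem (hD i x hx) (Submodule.smul_mem _ lam hx)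

theorem EvenBilin.compl₂ (hm : EvenBilin gr m) {E : A →ₗ[ℂ] A} (hE : EvenLin gr E) :
    EvenBilin gr (m.compl₂ E) :=
  fun i j x hx y hy => hm i j x hx (E y) (hE j y hy)

theorem IsDer.add_smul_one {D : A →ₗ[ℂ] A} (lam : ℂ)
    (hD : ∀ x y : A, D (br x y) = br (D x) y + br x (D y) + lam • br x y) :
    IsDer br (D + lam • 1) := by
  intro x y
  simp only [LinearMap.add_apply, LinearMap.smul_apply, Module.End.one_apply, map_add,
    map_smul, hD]
  module

theorem add_smul_one_comm {D α : A →ₗ[ℂ] A} (h : ∀ x, D (α x) = α (D x)) (lam : ℂ) :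
    ∀ x, (D + lam • 1) (α x) = α ((D + lam • 1) x) := by
  simp [h]

theorem compl₂_add_smul_one (D : A →ₗ[ℂ] A) (lam : ℂ) :
    m.compl₂ (D + lam • 1) = m.compl₂ D + lam • m := by
  ext x y
  simp

namespace CommHomAssocSuper

theorem mul_left_comm (h : CommHomAssocSuper gr m α) {i j k : ZMod 2} {x y z : A}
    (hx : x ∈ gr i) (hy : y ∈ gr j) (hz : z ∈ gr k) :
    m (α x) (m y z) = sg i j • m (α y) (m x z) := by
  rw [h.2.2.2 i j k x hx y hy z hz, h.2.2.1 i j x hx y hy, map_smul, LinearMap.smul_apply,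
    h.2.2.2 j i k y hy x hx z hz]

theorem homNovikovSuper_compl₂_add_smul_one (h : CommHomAssocSuper gr m α) {D : A →ₗ[ℂ] A}
    (hDeven : EvenLin gr D) (hD : IsDer m D) (hDα : ∀ x, D (α x) = α (D x)) (lam : ℂ) :
    HomNovikovSuper gr (m.compl₂ (D + lam • 1)) α := by
  set E := D + lam • 1
  have hEeven : EvenLin gr E := hDeven.add_smul_one lam
  have hEα : ∀ x, E (α x) = α (E x) := add_smul_one_comm hDα lam
  have hEm : ∀ x y, E (m x y) = m (D x) y + m x (E y) := by
    intro x y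
    simp only [E, LinearMap.add_apply, LinearMap.smul_apply, Module.End.one_apply, hD x y,
      map_add, map_smul]
    abel
  refine ⟨h.1, h.2.1.compl₂ hEeven, ?_, ?_⟩
  · intro i j k x hx y hy z hz
    have hw : D (E z) ∈ gr k := hDeven k _ (hEeven k z hz)
    have assoc : ∀ {a b : ZMod 2} {u v : A}, u ∈ gr a → v ∈ gr b →
        m.compl₂ E (m.compl₂ E u v) (α z) - m.compl₂ E (α u) (m.compl₂ E v z)
          = -m (α u) (m v (D (E z))) := by
      intro a b u v hu hv
      simp only [LinearMap.compl₂_apply, hEα, hEm,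
        ← h.2.2.2 a b k u hu (E v) (hEeven b v hv) (E z) (hEeven k z hz)]
      simp only [E, LinearMap.add_apply, LinearMap.smul_apply, Module.End.one_apply, map_add,
        map_smul]
      module
    rw [assoc hx hy, assoc hy hx, h.mul_left_comm hy hx hw, smul_neg, smul_smul,
      sg_comm j i, sg_mul_self, one_smul]
  · intro i j k x hx y hy z hz
    have hEy := hEeven j y hy
    have hEz := hEeven k z hz
    simp only [LinearMap.compl₂_apply, hEα]
    rw [← h.2.2.2 i j k x hx _ hEy _ hEz, h.2.2.1 j k _ hEy _ hEz, map_smul,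
      ← h.2.2.2 i k j x hx _ hEz _ hEy]

end CommHomAssocSuper

namespace HomPoissonSuper

theorem br_mul_left (hP : HomPoissonSuper gr m br α) {a b c : ZMod 2} {u v w : A}
    (hu : u ∈ gr a) (hv : v ∈ gr b) (hw : w ∈ gr c) :
    br (m u v) (α w) = m (α u) (br v w) + sg b a • m (α v) (br u w) := by
  obtain ⟨⟨hα, hm, -⟩, ⟨-, -, hanti, -⟩, hLeib⟩ := hP
  rw [hanti (a + b) c _ (hm a b u hu v hv) _ (hα c w hw), hLeib c a b w hw u hu v hv,
    hanti c b w hw v hv, hanti c a w hw u hu]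
  simp only [map_neg, map_smul]
  match_scalars <;> grind [sg_mul_self, sg_comm, sg_add_left, sg_add_right]

theorem compatible_compl₂ (hP : HomPoissonSuper gr m br α) {E : A →ₗ[ℂ] A}
    (hEeven : EvenLin gr E) (hEα : ∀ x, E (α x) = α (E x)) (hEbr : IsDer br E) :
    ∀ (i j k : ZMod 2), ∀ x ∈ gr i, ∀ y ∈ gr j, ∀ z ∈ gr k,
      br (m.compl₂ E x y) (α z) - sg j k • br (m.compl₂ E x z) (α y)
        + m.compl₂ E (br x y) (α z) - sg j k • m.compl₂ E (br x z) (α y)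
        - m.compl₂ E (α x) (br y z) = 0 := by
  intro i j k x hx y hy z hz
  have hEy := hEeven j y hy
  have hEz := hEeven k z hz
  simp only [LinearMap.compl₂_apply, hEα, hEbr y z, map_add]
  rw [hP.br_mul_left hx hEy hz, hP.br_mul_left hx hEz hy]
  obtain ⟨⟨hα, -, hcomm, -⟩, ⟨-, hbr, hanti, -⟩, -⟩ := hP
  rw [hcomm _ k _ (hbr i j x hx y hy) _ (hα k _ hEz),
    hcomm _ j _ (hbr i k x hx z hz) _ (hα j _ hEy), hanti k j _ hEz y hy]
  simp only [map_neg, map_smul]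
  match_scalars <;> grind [sg_mul_self, sg_comm, sg_add_left, sg_add_right]

end HomPoissonSuper

theorem superHomGD_of_homPoisson_general
    {A : Type*} [AddCommGroup A] [Module ℂ A]
    (gr : ZMod 2 → Submodule ℂ A)
    (m br : A →ₗ[ℂ] A →ₗ[ℂ] A) (α : A →ₗ[ℂ] A)
    (hP : HomPoissonSuper gr m br α)
    (D : A →ₗ[ℂ] A) (hDeven : EvenLin gr D) (hD : IsDer m D)
    (hcomm : ∀ x : A, D (α x) = α (D x)) (lam : ℂ)
    (hDbr : ∀ x y : A, D (br x y) = br (D x) y + br x (D y) + lam • br x y) :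
    SuperHomGD gr br (m.compl₂ D + lam • m) α := by
  rw [← compl₂_add_smul_one]
  exact ⟨hP.2.1, hP.1.homNovikovSuper_compl₂_add_smul_one hDeven hD hcomm lam,
    hP.compatible_compl₂ (hDeven.add_smul_one lam) (add_smul_one_comm hcomm lam)
      (IsDer.add_smul_one lam hDbr)⟩

/-- If `(A, ·, [·,·], α)` is a Hom-Poisson superalgebra and `D` an even
derivation of `(A, ·)` with `Dα = αD` and `D([x,y]) = [D(x),y] + [x,D(y)] + λ[x,y]`,
then with `x∘y = x·D(y) + λ x·y`, `(A, [·,·], ∘, α)` is a super Hom-Gel'fand-Dorfman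
bialgebra. -/
theorem superHomGD_of_homPoisson
    {A : Type*} [AddCommGroup A] [Module ℂ A]
    (gr : ZMod 2 → Submodule ℂ A) (hgr : IsSupergrading gr)
    (m br : A →ₗ[ℂ] A →ₗ[ℂ] A) (α : A →ₗ[ℂ] A)
    (hP : HomPoissonSuper gr m br α)
    (D : A →ₗ[ℂ] A) (hDeven : EvenLin gr D) (hD : IsDer m D)
    (hcomm : ∀ x : A, D (α x) = α (D x)) (lam : ℂ)
    (hDbr : ∀ x y : A, D (br x y) = br (D x) y + br x (D y) + lam • br x y) :
    SuperHomGD gr br (m.compl₂ D + lam • m) α :=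
  superHomGD_of_homPoisson_general gr m br α hP D hDeven hD hcomm lam hDbr

end
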